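/- arXiv:2011.06416 — 3 statements merged into one kernel-verified Lean document; each statement's English description precedes it below -/
import Mathlib

section
/- Let (Y,X) be random variables with Y real-valued and X taking values in ℝ^d, and let g : ℝ^d × ℝ → ℝ be measurable with y ↦ g(x,y) strictly increasing for every x ∈ ℝ^d. If the random variable e := g(X,Y) is independent of X and has the standard normal distribution N(0,1), then for every y ∈ ℝ and every Borel set A ⊆ ℝ^d, P({Y ≤ y} ∩ {X ∈ A}) = E[1_{A}(X) · Φ(g(X,y))]; that is, the conditional CDF of Y given X is F_{Y|X}(y|X) = Φ(g(X,y)) almost surely. -/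
open MeasureTheory ProbabilityTheory Set

/-- The standard normal probability density function φ. -/
noncomputable def stdGaussianPDF (x : ℝ) : ℝ :=
  (Real.sqrt (2 * Real.pi))⁻¹ * Real.exp (-(x ^ 2) / 2)

/-- The standard normal cumulative distribution function Φ. -/
noncomputable def stdGaussianCDF (x : ℝ) : ℝ :=
  ∫ t in Set.Iic x, stdGaussianPDF t

lemma stdGaussianPDF_eq : stdGaussianPDF = gaussianPDFReal 0 1 := by
  funext x
  simp [stdGaussianPDF, gaussianPDFReal]

lemma gaussianReal_Iic (c : ℝ) :
    gaussianReal 0 1 (Set.Iic c) = ENNReal.ofReal (stdGaussianCDF c) := by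
  rw [gaussianReal_apply_eq_integral 0 one_ne_zero]
  congr 1
  rw [stdGaussianCDF, stdGaussianPDF_eq]

lemma stdGaussianCDF_nonneg (c : ℝ) : 0 ≤ stdGaussianCDF c := by
  refine integral_nonneg fun t => ?_
  rw [stdGaussianPDF_eq]
  exact gaussianPDFReal_nonneg 0 1 t

lemma stdGaussianCDF_eq_toReal (c : ℝ) :
    stdGaussianCDF c = (gaussianReal 0 1 (Set.Iic c)).toReal := by
  rw [gaussianReal_Iic, ENNReal.toReal_ofReal (stdGaussianCDF_nonneg c)]

lemma stdGaussianCDF_le_one (c : ℝ) : stdGaussianCDF c ≤ 1 := by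
  rw [stdGaussianCDF_eq_toReal]
  exact ENNReal.toReal_le_of_le_ofReal zero_le_one (by simpa using prob_le_one)

lemma measurable_stdGaussianCDF : Measurable stdGaussianCDF := by
  have : Monotone stdGaussianCDF := by
    intro a b hab
    rw [stdGaussianCDF_eq_toReal, stdGaussianCDF_eq_toReal]
    exact ENNReal.toReal_mono (measure_ne_top _ _) (measure_mono (Set.Iic_subset_Iic.mpr hab))
  exact this.measurable

/-- If `e = g(X,Y)` is standard normal and independent of `X`, with `y ↦ g(x,y)` strictly
increasing, then the conditional CDF of `Y` given `X` is `Φ(g(X,y))`: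
`P({Y ≤ y} ∩ {X ∈ A}) = E[1_A(X) Φ(g(X,y))]` for all `y` and Borel `A`. -/
theorem conditional_cdf_of_gaussian_transform
    {Ω : Type*} [MeasureSpace Ω] [IsProbabilityMeasure (ℙ : Measure Ω)]
    {d : ℕ} (Y : Ω → ℝ) (X : Ω → (Fin d → ℝ))
    (hY : Measurable Y) (hX : Measurable X)
    (g : (Fin d → ℝ) × ℝ → ℝ) (hg : Measurable g)
    (hmono : ∀ x : Fin d → ℝ, StrictMono (fun y => g (x, y)))
    (hindep : IndepFun (fun ω => g (X ω, Y ω)) X ℙ)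
    (hgauss : Measure.map (fun ω => g (X ω, Y ω)) ℙ = gaussianReal 0 1) :
    ∀ (y : ℝ) (A : Set (Fin d → ℝ)), MeasurableSet A →
      (ℙ ({ω | Y ω ≤ y} ∩ X ⁻¹' A)).toReal
        = ∫ ω, A.indicator (fun _ => (1 : ℝ)) (X ω) * stdGaussianCDF (g (X ω, y)) ∂ℙ := by
  intro y A hA
  have hgy : Measurable fun x : Fin d → ℝ => g (x, y) :=
    hg.comp (measurable_id.prodMk measurable_const)
  have he : Measurable fun ω => g (X ω, Y ω) := hg.comp (hX.prodMk hY)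
  -- the joint law is the product law
  have hjoint : Measure.map (fun ω => (g (X ω, Y ω), X ω)) ℙ
      = (gaussianReal 0 1).prod (Measure.map X ℙ) := by
    rw [← hgauss]
    exact (indepFun_iff_map_prod_eq_prod_map_map he.aemeasurable hX.aemeasurable).mp hindep
  set S : Set (ℝ × (Fin d → ℝ)) := {p | p.1 ≤ g (p.2, y)} ∩ Prod.snd ⁻¹' A with hS
  have hSm : MeasurableSet S :=
    (measurableSet_le measurable_fst (hgy.comp measurable_snd)).inter (measurable_snd hA)
  have hset : {ω | Y ω ≤ y} ∩ X ⁻¹' A = (fun ω => (g (X ω, Y ω), X ω)) ⁻¹' S := by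
    ext ω
    simp only [hS, Set.mem_inter_iff, Set.mem_setOf_eq, Set.mem_preimage]
    exact and_congr_left fun _ => ((hmono (X ω)).le_iff_le).symm
  have hmeas : ℙ ({ω | Y ω ≤ y} ∩ X ⁻¹' A)
      = ((gaussianReal 0 1).prod (Measure.map X ℙ)) S := by
    rw [hset, ← Measure.map_apply (he.prodMk hX) hSm, hjoint]
  have hfiber : ∀ x : Fin d → ℝ, gaussianReal 0 1 ((fun t => (t, x)) ⁻¹' S)
      = A.indicator (fun x => ENNReal.ofReal (stdGaussianCDF (g (x, y)))) x := by
    intro x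
    by_cases hx : x ∈ A
    · have : (fun t : ℝ => (t, x)) ⁻¹' S = Set.Iic (g (x, y)) := by
        ext t; simp [hS, hx, Set.mem_Iic]
      rw [this, gaussianReal_Iic, Set.indicator_of_mem hx]
    · have : (fun t : ℝ => (t, x)) ⁻¹' S = ∅ := by
        ext t; simp [hS, hx]
      rw [this, Set.indicator_of_notMem hx]
      simp
  have hprod : ((gaussianReal 0 1).prod (Measure.map X ℙ)) S
      = ∫⁻ x, A.indicator (fun x => ENNReal.ofReal (stdGaussianCDF (g (x, y)))) x
          ∂(Measure.map X ℙ) := by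
    rw [Measure.prod_apply_symm hSm]
    exact lintegral_congr hfiber
  -- Right hand side
  have hCDFmeas : Measurable fun x : Fin d → ℝ => stdGaussianCDF (g (x, y)) :=
    measurable_stdGaussianCDF.comp hgy
  have hint : Integrable (fun x => stdGaussianCDF (g (x, y))) (Measure.map X ℙ) := by
    refine Integrable.mono' (integrable_const 1) hCDFmeas.aestronglyMeasurable
      (ae_of_all _ fun x => ?_)
    rw [Real.norm_eq_abs, abs_of_nonneg (stdGaussianCDF_nonneg _)]
    exact stdGaussianCDF_le_one _
  have hRHS : ∫ ω, A.indicator (fun _ => (1 : ℝ)) (X ω) * stdGaussianCDF (g (X ω, y)) ∂ℙ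
      = ∫ x, A.indicator (fun x => stdGaussianCDF (g (x, y))) x ∂(Measure.map X ℙ) := by
    rw [integral_map hX.aemeasurable]
    · refine integral_congr_ae (ae_of_all _ fun x => ?_)
      by_cases hx : X x ∈ A <;> simp [hx]
    · exact ((hCDFmeas.indicator hA).aestronglyMeasurable)
      |>.congr (ae_of_all _ fun x => by by_cases hx : x ∈ A <;> simp [hx])
  rw [hmeas, hprod, hRHS, integral_indicator hA]
  have : ∫⁻ x, A.indicator (fun x => ENNReal.ofReal (stdGaussianCDF (g (x, y)))) x
      ∂(Measure.map X ℙ)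
      = ∫⁻ x in A, ENNReal.ofReal (stdGaussianCDF (g (x, y))) ∂(Measure.map X ℙ) := by
    rw [lintegral_indicator hA]
  rw [this, ← ofReal_integral_eq_lintegral_ofReal hint.restrict
    (ae_of_all _ fun x => stdGaussianCDF_nonneg _),
    ENNReal.toReal_ofReal (integral_nonneg fun x => stdGaussianCDF_nonneg _)]
end

section
/- Let (Y,X) be random variables with Y real-valued and X taking values in ℝ^d, and let g : ℝ^d × ℝ → ℝ be measurable such that for every x ∈ ℝ^d the map y ↦ g(x,y) is continuously differentiable with everywhere positive derivative ∂_y g(x,y) > 0 and satisfies lim_{y→−∞} g(x,y) = −∞ and lim_{y→+∞} g(x,y) = +∞. If e := g(X,Y) is independent of X and has the standard normal distribution N(0,1), then for every Borel set B ⊆ ℝ and every Borel set A ⊆ ℝ^d, P({Y ∈ B} ∩ {X ∈ A}) = E[1_{A}(X) · ∫_B φ(g(X,t)) ∂_y g(X,t) dt]; that is, the conditional density of Y given X is f_{Y|X}(y|X) = φ(g(X,y)) ∂_y g(X,y) almost surely. -/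
open MeasureTheory ProbabilityTheory Set Filter

/-!
For each `x`, `y ↦ g (x, y)` is an increasing bijection of `ℝ`; with `H x` its inverse,
`Y = H X e` where `e = g (X, Y)`. Independence makes the joint law of `(X, e)` the product of the
law of `X` with `N(0,1)`, so `P(Y ∈ B, X ∈ A) = ∫_A N(0,1)(g (x, ·) '' B) dP_X(x)`, and the
one-dimensional change of variables `u = g (x, t)` writes `N(0,1)(g (x, ·) '' B)` as
`∫_B φ (g (x, t)) ∂_y g (x, t) dt`.
-/

open Topology

theorem stdGaussianPDF_nonneg (x : ℝ) : 0 ≤ stdGaussianPDF x := by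
  unfold stdGaussianPDF
  positivity

theorem gaussianPDFReal_zero_one : gaussianPDFReal 0 1 = stdGaussianPDF := by
  ext x
  simp [gaussianPDFReal, stdGaussianPDF]

theorem tendsto_inv_natCast_nhdsGT_zero :
    Tendsto (fun n : ℕ => (n : ℝ)⁻¹) atTop (𝓝[>] 0) :=
  tendsto_nhdsWithin_iff.2 ⟨tendsto_inv_atTop_nhds_zero_nat,
    (eventually_gt_atTop 0).mono fun n hn => by simpa using hn⟩

theorem measurable_of_hasDerivAt_snd {α : Type*} [MeasurableSpace α] {f f' : α × ℝ → ℝ}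
    (hf : Measurable f) (hf' : ∀ x y, HasDerivAt (fun z => f (x, z)) (f' (x, y)) y) :
    Measurable f' := by
  refine measurable_of_tendsto_metrizable (f := fun (n : ℕ) (p : α × ℝ) =>
    ((n : ℝ)⁻¹)⁻¹ • (f (p.1, p.2 + (n : ℝ)⁻¹) - f (p.1, p.2))) (fun n => by fun_prop)
    (tendsto_pi_nhds.2 fun p => ?_)
  exact ((hf' p.1 p.2).tendsto_slope_zero_right).comp tendsto_inv_natCast_nhdsGT_zero

theorem measurable_uncurry_of_rightInverse {α : Type*} [MeasurableSpace α] {g : α × ℝ → ℝ}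
    (hg : Measurable g) (hmono : ∀ x, StrictMono fun y => g (x, y)) {H : α → ℝ → ℝ}
    (hH : ∀ x u, g (x, H x u) = u) : Measurable (Function.uncurry H) := by
  refine measurable_of_Iic fun a => ?_
  have : Function.uncurry H ⁻¹' Iic a = {p | p.2 ≤ g (p.1, a)} := by
    ext ⟨x, u⟩
    rw [mem_preimage, Function.uncurry_apply_pair, mem_Iic, ← (hmono x).le_iff_le, hH]
    rfl
  rw [this]
  exact measurableSet_le measurable_snd (by fun_prop)

theorem gaussianReal_image_eq_ofReal_integral (μ : ℝ) {v : NNReal} (hv : v ≠ 0) {f f' : ℝ → ℝ}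
    {B : Set ℝ} (hB : MeasurableSet B) (hf : ∀ t, HasDerivAt f (f' t) t) (hf' : ∀ t, 0 ≤ f' t)
    (hinj : InjOn f B) :
    gaussianReal μ v (f '' B) = ENNReal.ofReal (∫ t in B, gaussianPDFReal μ v (f t) * f' t) := by
  rw [gaussianReal_apply_eq_integral μ hv,
    integral_image_eq_integral_abs_deriv_smul hB (fun t _ => (hf t).hasDerivWithinAt) hinj]
  simp_rw [abs_of_nonneg (hf' _), smul_eq_mul, mul_comm]

theorem measure_inter_preimage_eq_setLIntegral_of_indepFun {Ω α β γ : Type*}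
    [MeasurableSpace Ω] [MeasurableSpace α] [MeasurableSpace β] [MeasurableSpace γ]
    {μ : Measure Ω} [IsFiniteMeasure μ] {X : Ω → α} {e : Ω → β}
    (hX : Measurable X) (he : Measurable e) (hindep : IndepFun e X μ)
    {H : α → β → γ} (hH : Measurable (Function.uncurry H))
    {B : Set γ} {A : Set α} (hB : MeasurableSet B) (hA : MeasurableSet A) :
    μ ({ω | H (X ω) (e ω) ∈ B} ∩ X ⁻¹' A) = ∫⁻ x in A, μ.map e (H x ⁻¹' B) ∂μ.map X := by
  have hS : MeasurableSet (Prod.fst ⁻¹' A ∩ Function.uncurry H ⁻¹' B) :=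
    (measurable_fst hA).inter (hH hB)
  have hevent : {ω | H (X ω) (e ω) ∈ B} ∩ X ⁻¹' A
      = (fun ω => (X ω, e ω)) ⁻¹' (Prod.fst ⁻¹' A ∩ Function.uncurry H ⁻¹' B) := by
    ext ω; simp [and_comm]
  rw [hevent, ← Measure.map_apply (hX.prodMk he) hS,
    (indepFun_iff_map_prod_eq_prod_map_map hX.aemeasurable he.aemeasurable).1 hindep.symm,
    Measure.prod_apply hS, ← lintegral_indicator hA]
  refine lintegral_congr fun x => ?_
  by_cases hx : x ∈ A
  · rw [indicator_of_mem hx]; congr 1; ext; simp [hx]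
  · rw [indicator_of_notMem hx, ← measure_empty (μ := μ.map e)]; congr 1; ext; simp [hx]

theorem conditional_density_of_gaussian_transform_general
    {Ω : Type*} [MeasureSpace Ω] [IsProbabilityMeasure (ℙ : Measure Ω)]
    {d : ℕ} (Y : Ω → ℝ) (X : Ω → (Fin d → ℝ))
    (hY : Measurable Y) (hX : Measurable X)
    (g g' : (Fin d → ℝ) × ℝ → ℝ) (hg : Measurable g)
    (hderiv : ∀ (x : Fin d → ℝ) (y : ℝ), HasDerivAt (fun z => g (x, z)) (g' (x, y)) y)
    (hpos : ∀ (x : Fin d → ℝ) (y : ℝ), 0 < g' (x, y))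
    (hbot : ∀ x : Fin d → ℝ, Tendsto (fun y => g (x, y)) atBot atBot)
    (htop : ∀ x : Fin d → ℝ, Tendsto (fun y => g (x, y)) atTop atTop)
    (hindep : IndepFun (fun ω => g (X ω, Y ω)) X ℙ)
    (hgauss : Measure.map (fun ω => g (X ω, Y ω)) ℙ = gaussianReal 0 1) :
    ∀ (B : Set ℝ) (A : Set (Fin d → ℝ)), MeasurableSet B → MeasurableSet A →
      (ℙ ({ω | Y ω ∈ B} ∩ X ⁻¹' A)).toReal
        = ∫ ω in X ⁻¹' A, (∫ t in B, stdGaussianPDF (g (X ω, t)) * g' (X ω, t)) ∂ℙ := by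
  intro B A hB hA
  have hmono x : StrictMono fun y => g (x, y) :=
    strictMono_of_deriv_pos fun y => (hderiv x y).deriv ▸ hpos x y
  have hsurj x : Function.Surjective fun y => g (x, y) :=
    (continuous_iff_continuousAt.2 fun y => (hderiv x y).continuousAt).surjective (htop x) (hbot x)
  choose H hH using hsurj
  have hHg x y : H x (g (x, y)) = y := (hmono x).injective (hH x (g (x, y)))
  set F : (Fin d → ℝ) → ℝ := fun x => ∫ t in B, stdGaussianPDF (g (x, t)) * g' (x, t)
  have hF : StronglyMeasurable F := by
    have hg' := measurable_of_hasDerivAt_snd hg hderiv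
    have hφ : Measurable stdGaussianPDF :=
      gaussianPDFReal_zero_one ▸ measurable_gaussianPDFReal 0 1
    exact ((hφ.comp hg).mul hg').stronglyMeasurable.integral_prod_right'
  have hF_nonneg : 0 ≤ F := fun x =>
    integral_nonneg fun t => mul_nonneg (stdGaussianPDF_nonneg _) (hpos x t).le
  have hlaw x : gaussianReal 0 1 (H x ⁻¹' B) = ENNReal.ofReal (F x) := by
    rw [← image_eq_preimage_of_inverse (hHg x) (hH x), gaussianReal_image_eq_ofReal_integral 0
      one_ne_zero hB (hderiv x) (fun y => (hpos x y).le) (hmono x).injective.injOn,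
      gaussianPDFReal_zero_one]
  calc (ℙ ({ω | Y ω ∈ B} ∩ X ⁻¹' A)).toReal
      = (ℙ ({ω | H (X ω) (g (X ω, Y ω)) ∈ B} ∩ X ⁻¹' A)).toReal := by simp only [hHg]
    _ = (∫⁻ x in A, ENNReal.ofReal (F x) ∂Measure.map X ℙ).toReal := by
      rw [measure_inter_preimage_eq_setLIntegral_of_indepFun hX (by fun_prop) hindep
        (measurable_uncurry_of_rightInverse hg hmono hH) hB hA, hgauss]
      simp only [hlaw]
    _ = ∫ x in A, F x ∂Measure.map X ℙ :=
      (integral_eq_lintegral_of_nonneg_ae (ae_of_all _ hF_nonneg) hF.aestronglyMeasurable).symm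
    _ = ∫ ω in X ⁻¹' A, F (X ω) := setIntegral_map hA hF.aestronglyMeasurable hX.aemeasurable

/-- If `e = g(X,Y)` is standard normal and independent of `X`, with `y ↦ g(x,y)` continuously
differentiable with everywhere positive derivative and tending to `∓∞` at `∓∞`, then the
conditional density of `Y` given `X` is `φ(g(X,y)) ∂_y g(X,y)`:
`P({Y ∈ B} ∩ {X ∈ A}) = E[1_A(X) ∫_B φ(g(X,t)) ∂_y g(X,t) dt]`. -/
theorem conditional_density_of_gaussian_transform
    {Ω : Type*} [MeasureSpace Ω] [IsProbabilityMeasure (ℙ : Measure Ω)]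
    {d : ℕ} (Y : Ω → ℝ) (X : Ω → (Fin d → ℝ))
    (hY : Measurable Y) (hX : Measurable X)
    (g g' : (Fin d → ℝ) × ℝ → ℝ) (hg : Measurable g)
    (hderiv : ∀ (x : Fin d → ℝ) (y : ℝ), HasDerivAt (fun z => g (x, z)) (g' (x, y)) y)
    (hcont : ∀ x : Fin d → ℝ, Continuous (fun y => g' (x, y)))
    (hpos : ∀ (x : Fin d → ℝ) (y : ℝ), 0 < g' (x, y))
    (hbot : ∀ x : Fin d → ℝ, Tendsto (fun y => g (x, y)) atBot atBot)
    (htop : ∀ x : Fin d → ℝ, Tendsto (fun y => g (x, y)) atTop atTop)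
    (hindep : IndepFun (fun ω => g (X ω, Y ω)) X ℙ)
    (hgauss : Measure.map (fun ω => g (X ω, Y ω)) ℙ = gaussianReal 0 1) :
    ∀ (B : Set ℝ) (A : Set (Fin d → ℝ)), MeasurableSet B → MeasurableSet A →
      (ℙ ({ω | Y ω ∈ B} ∩ X ⁻¹' A)).toReal
        = ∫ ω in X ⁻¹' A, (∫ t in B, stdGaussianPDF (g (X ω, t)) * g' (X ω, t)) ∂ℙ :=
  conditional_density_of_gaussian_transform_general Y X hY hX g g' hg hderiv hpos hbot htop hindep
    hgauss
end

section
/- Let T₁,…,Tₙ and t₁,…,tₙ be vectors in ℝ^m, and suppose b̂ ∈ ℝ^m satisfies ⟨b̂, t_i⟩ > 0 for all i and the first-order conditions Σ_{i=1}^n (−T_i⟨b̂,T_i⟩ + t_i/⟨b̂,t_i⟩) = 0. Define û_i = ⟨b̂,T_i⟩ and v̂_i = −1/⟨b̂,t_i⟩ for i = 1,…,n. Then: (a) (û,v̂) ∈ ℝⁿ × (−∞,0)ⁿ is feasible for the dual problem, i.e., Σ_{i=1}^n (T_i û_i + t_i v̂_i) = 0; and (b) strong duality holds: −n((1/2)log(2π)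 + 1) + Σ_{i=1}^n (û_i²/2 − log(−v̂_i)) = Σ_{i=1}^n (−(1/2)(log(2π) + ⟨b̂,T_i⟩²) + log⟨b̂,t_i⟩), i.e., the dual objective evaluated at (û,v̂) equals the primal maximum likelihood objective evaluated at b̂. -/
open Set

/-- Theorem 8(iii): if `b̂` satisfies the monotonicity constraints `⟨b̂,tᵢ⟩ > 0` and the
first-order conditions `Σᵢ (−Tᵢ⟨b̂,Tᵢ⟩ + tᵢ/⟨b̂,tᵢ⟩) = 0`, then `ûᵢ = ⟨b̂,Tᵢ⟩`,
`v̂ᵢ = −1/⟨b̂,tᵢ⟩` is dual feasible (`Σᵢ (Tᵢûᵢ + tᵢv̂ᵢ) = 0`) and strong duality holds: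
the dual objective at `(û,v̂)` equals the primal ML objective at `b̂`. -/
theorem primal_dual_correspondence_strong_duality
    {n m : ℕ} (T t : Fin n → (Fin m → ℝ)) (b : Fin m → ℝ)
    (hpos : ∀ i, 0 < ∑ k, b k * t i k)
    (hfoc : ∀ l, (∑ i, (-(∑ k, b k * T i k) * T i l + t i l / (∑ k, b k * t i k))) = 0) :
    (∀ l, (∑ i, (T i l * (∑ k, b k * T i k) + t i l * (-(∑ k, b k * t i k)⁻¹))) = 0) ∧
    (-(n : ℝ) * ((1 / 2) * Real.log (2 * Real.pi) + 1)
        + ∑ i, ((∑ k, b k * T i k) ^ 2 / 2 - Real.log (-(-(∑ k, b k * t i k)⁻¹)))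
      = ∑ i, (-(1 / 2) * (Real.log (2 * Real.pi) + (∑ k, b k * T i k) ^ 2)
          + Real.log (∑ k, b k * t i k))) := by
  have hne : ∀ i, (∑ k, b k * t i k) ≠ 0 := fun i => (hpos i).ne'
  constructor
  · intro l
    have h := hfoc l
    have : (∑ i, (T i l * (∑ k, b k * T i k) + t i l * (-(∑ k, b k * t i k)⁻¹)))
        = -∑ i, (-(∑ k, b k * T i k) * T i l + t i l / (∑ k, b k * t i k)) := by
      rw [← Finset.sum_neg_distrib]
      apply Finset.sum_congr rfl
      intro i _
      field_simp
      ring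
    rw [this, h, neg_zero]
  · have key : (∑ i, (∑ k, b k * T i k) ^ 2) = (n : ℝ) := by
      have h0 : (∑ l, b l * ∑ i, (-(∑ k, b k * T i k) * T i l + t i l / (∑ k, b k * t i k))) = 0 := by
        simp only [hfoc, mul_zero, Finset.sum_const_zero]
      have h1 : (∑ l, b l * ∑ i, (-(∑ k, b k * T i k) * T i l + t i l / (∑ k, b k * t i k)))
          = ∑ i : Fin n, (-(∑ k, b k * T i k) ^ 2 + 1) := by
        simp only [Finset.mul_sum]
        rw [Finset.sum_comm]
        apply Finset.sum_congr rfl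
        intro i _
        have : (∑ l, b l * (-(∑ k, b k * T i k) * T i l + t i l / (∑ k, b k * t i k)))
            = -(∑ k, b k * T i k) * (∑ l, b l * T i l)
              + (∑ l, b l * t i l) / (∑ k, b k * t i k) := by
          rw [Finset.mul_sum, Finset.sum_div, ← Finset.sum_add_distrib]
          apply Finset.sum_congr rfl
          intro l _
          ring
        rw [this, div_self (hne i)]
        ring
      have h2 := h1 ▸ h0
      have h3 : (∑ i : Fin n, (-(∑ k, b k * T i k) ^ 2 + 1))
          = -(∑ i, (∑ k, b k * T i k) ^ 2) + n := by
        rw [Finset.sum_add_distrib, Finset.sum_neg_distrib]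
        simp
      rw [h3] at h2
      linarith
    have hlog : ∀ i, Real.log (-(-(∑ k, b k * t i k)⁻¹)) = -Real.log (∑ k, b k * t i k) := by
      intro i
      rw [neg_neg, Real.log_inv]
    simp only [hlog]
    have e1 : (∑ i, ((∑ k, b k * T i k) ^ 2 / 2 - -Real.log (∑ k, b k * t i k)))
        = (∑ i, (∑ k, b k * T i k) ^ 2) / 2 + ∑ i, Real.log (∑ k, b k * t i k) := by
      rw [Finset.sum_sub_distrib, ← Finset.sum_div, Finset.sum_neg_distrib, sub_neg_eq_add]
    have e2 : (∑ i, (-(1 / 2) * (Real.log (2 * Real.pi) + (∑ k, b k * T i k) ^ 2)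
          + Real.log (∑ k, b k * t i k)))
        = (n : ℝ) * (-(1/2) * Real.log (2 * Real.pi))
          + (-(1/2) * ∑ i, (∑ k, b k * T i k) ^ 2 + ∑ i, Real.log (∑ k, b k * t i k)) := by
      have h : ∀ i ∈ Finset.univ, -(1 / 2) * (Real.log (2 * Real.pi) + (∑ k, b k * T i k) ^ 2)
            + Real.log (∑ k, b k * t i k)
          = -(1/2) * Real.log (2 * Real.pi)
            + (-(1/2) * (∑ k, b k * T i k) ^ 2 + Real.log (∑ k, b k * t i k)) := by
        intro i _
        ring
      rw [Finset.sum_congr rfl h, Finset.sum_add_distrib, Finset.sum_add_distrib,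
        Finset.sum_const, ← Finset.mul_sum]
      simp [nsmul_eq_mul]
    rw [e1, e2, key]
    ring
end
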